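/- arXiv:cs/0606047 — 4 statements merged into one kernel-verified Lean document; each statement's English description precedes it below -/
import Mathlib

section
/- If x and y both satisfy z = G·z with z ≥ 0 and eᵀz = 1, where G = α·S + (1−α)·v·eᵀ, S column-stochastic, 0 ≤ α < 1, v ≥ 0, eᵀv = 1, then x = y (uniqueness of the PageRank vector). -/
open Matrix BigOperators

theorem stmt10 (n : ℕ) (S G : Matrix (Fin n) (Fin n) ℝ) (v : Fin n → ℝ) (α : ℝ)
    (hS0 : ∀ i j, 0 ≤ S i j) (hS1 : ∀ j, ∑ i, S i j = 1)
    (hv0 : ∀ i, 0 ≤ v i) (hv1 : ∑ i, v i = 1)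
    (hα0 : 0 ≤ α) (hα1 : α < 1)
    (hG : ∀ i j, G i j = α * S i j + (1 - α) * v i)
    (x y : Fin n → ℝ)
    (hx : G.mulVec x = x) (hx0 : ∀ i, 0 ≤ x i) (hx1 : ∑ i, x i = 1)
    (hy : G.mulVec y = y) (hy0 : ∀ i, 0 ≤ y i) (hy1 : ∑ i, y i = 1) :
    x = y := by
  set d : Fin n → ℝ := fun i => x i - y i with hd
  have hdsum : ∑ j, d j = 0 := by
    simp [hd, Finset.sum_sub_distrib, hx1, hy1]
  have hfix : ∀ i, d i = α * ∑ j, S i j * d j := by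
    intro i
    have hxi := congrFun hx i
    have hyi := congrFun hy i
    simp only [mulVec, dotProduct] at hxi hyi
    have : d i = ∑ j, G i j * d j := by
      simp only [hd, mul_sub, Finset.sum_sub_distrib, hxi, hyi]
    rw [this]
    have : ∀ j, G i j * d j = α * (S i j * d j) + (1 - α) * v i * d j := by
      intro j; rw [hG]; ring
    rw [Finset.sum_congr rfl fun j _ => this j, Finset.sum_add_distrib,
      ← Finset.mul_sum, ← Finset.mul_sum, hdsum, mul_zero, add_zero]
  have key : ∑ i, |d i| ≤ α * ∑ i, |d i| := by
    calc ∑ i, |d i| = ∑ i, α * |∑ j, S i j * d j| := by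
          refine Finset.sum_congr rfl fun i _ => ?_
          rw [hfix i, abs_mul, abs_of_nonneg hα0]
      _ ≤ ∑ i, α * ∑ j, S i j * |d j| := by
          refine Finset.sum_le_sum fun i _ => ?_
          refine mul_le_mul_of_nonneg_left ?_ hα0
          calc |∑ j, S i j * d j| ≤ ∑ j, |S i j * d j| := Finset.abs_sum_le_sum_abs _ _
            _ = ∑ j, S i j * |d j| := by
                refine Finset.sum_congr rfl fun j _ => ?_
                rw [abs_mul, abs_of_nonneg (hS0 i j)]
      _ = α * ∑ j, (∑ i, S i j) * |d j| := by
          rw [← Finset.mul_sum, Finset.sum_comm]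
          congr 1
          exact Finset.sum_congr rfl fun j _ => (Finset.sum_mul _ _ _).symm
      _ = α * ∑ i, |d i| := by
          congr 1
          exact Finset.sum_congr rfl fun j _ => by rw [hS1 j, one_mul]
  have hnn : 0 ≤ ∑ i, |d i| := Finset.sum_nonneg fun i _ => abs_nonneg _
  have hzero : ∑ i, |d i| = 0 := by nlinarith
  funext i
  have := (Finset.sum_eq_zero_iff_of_nonneg fun i _ => abs_nonneg (d i)).mp hzero i (Finset.mem_univ i)
  have : d i = 0 := abs_eq_zero.mp this
  simp only [hd] at this
  linarith
end

section
/- For the Google matrix G = α·S + (1−α)·v·eᵀ with S column-stochastic, 0 ≤ α < 1, eᵀv = 1: if λ is an eigenvalue of Gᵀ (equivalently of G) with λ ≠ 1, then |λ| ≤ α. -/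
open Matrix BigOperators

theorem stmt11 (n : ℕ) (S G : Matrix (Fin n) (Fin n) ℝ) (v : Fin n → ℝ) (α : ℝ)
    (hS0 : ∀ i j, 0 ≤ S i j) (hS1 : ∀ j, ∑ i, S i j = 1)
    (hv1 : ∑ i, v i = 1)
    (hα0 : 0 ≤ α) (hα1 : α < 1)
    (hG : ∀ i j, G i j = α * S i j + (1 - α) * v i) :
    ∀ μ : ℂ, μ ≠ 1 →
      Module.End.HasEigenvalue (Matrix.toLin' (Gᵀ.map Complex.ofReal)) μ →
      ‖μ‖ ≤ α := by
  intro μ hμ hev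
  obtain ⟨x, hx⟩ := hev.exists_hasEigenvector
  have hx0 : x ≠ 0 := hx.right
  have hxe : (Gᵀ.map Complex.ofReal) *ᵥ x = μ • x := by
    have h := hx.apply_eq_smul
    rwa [Matrix.toLin'_apply] at h
  have hdet : ((Gᵀ.map Complex.ofReal) - μ • 1).det = 0 := by
    rw [← Matrix.exists_mulVec_eq_zero_iff]
    refine ⟨x, hx0, ?_⟩
    simp [Matrix.sub_mulVec, Matrix.smul_mulVec, hxe]
  have hdet2 : ((G.map Complex.ofReal) - μ • 1).det = 0 := by
    rw [← Matrix.det_transpose]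
    have : ((G.map Complex.ofReal) - μ • 1)ᵀ = (Gᵀ.map Complex.ofReal) - μ • 1 := by
      ext i j
      simp [Matrix.transpose_apply, Matrix.one_apply, eq_comm]
    rw [this, hdet]
  obtain ⟨y, hy0, hy⟩ := (Matrix.exists_mulVec_eq_zero_iff).mpr hdet2
  have hGy : (G.map Complex.ofReal) *ᵥ y = μ • y := by
    have h := hy
    rw [Matrix.sub_mulVec, Matrix.smul_mulVec, Matrix.one_mulVec, sub_eq_zero] at h
    exact h
  -- sum of y is zero
  have hcol : ∀ j, ∑ i, G i j = 1 := by
    intro j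
    simp only [hG]
    rw [Finset.sum_add_distrib, ← Finset.mul_sum, ← Finset.mul_sum, hS1, hv1]
    ring
  have hsum0 : ∑ j, y j = 0 := by
    have h1 : ∑ i, ((G.map Complex.ofReal) *ᵥ y) i = ∑ j, y j := by
      simp only [Matrix.mulVec, dotProduct, Matrix.map_apply]
      rw [Finset.sum_comm]
      refine Finset.sum_congr rfl fun j _ => ?_
      rw [← Finset.sum_mul]
      have : ∑ i, (Complex.ofReal (G i j)) = 1 := by
        rw [← Complex.ofReal_sum, hcol j, Complex.ofReal_one]
      rw [this, one_mul]
    rw [hGy] at h1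
    simp only [Pi.smul_apply, smul_eq_mul, ← Finset.mul_sum] at h1
    have := sub_eq_zero.mpr h1
    rw [← sub_one_mul] at this
    rcases mul_eq_zero.mp this with h | h
    · exact absurd (sub_eq_zero.mp h) hμ
    · exact h
  -- entrywise reduction
  have hSy : ∀ i, μ * y i = (α : ℂ) * ∑ j, (S i j : ℂ) * y j := by
    intro i
    have h := congrFun hGy i
    simp only [Matrix.mulVec, dotProduct, Matrix.map_apply, Pi.smul_apply,
      smul_eq_mul] at h
    rw [← h]
    have : ∀ j, (Complex.ofReal (G i j)) * y j
        = (α : ℂ) * ((S i j : ℂ) * y j) + ((1 - α : ℝ) : ℂ) * (v i : ℂ) * y j := by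
      intro j
      rw [hG]
      push_cast
      ring
    rw [Finset.sum_congr rfl fun j _ => this j, Finset.sum_add_distrib,
      ← Finset.mul_sum, ← Finset.mul_sum, hsum0]
    ring
  -- 1-norm bound
  have hpos : 0 < ∑ j, ‖y j‖ := by
    obtain ⟨j, hj⟩ := Function.ne_iff.mp hy0
    refine Finset.sum_pos' (fun j _ => norm_nonneg _) ⟨j, Finset.mem_univ j, ?_⟩
    simpa using hj
  have hineq : ‖μ‖ * ∑ j, ‖y j‖ ≤ α * ∑ j, ‖y j‖ := by
    calc ‖μ‖ * ∑ j, ‖y j‖ = ∑ i, ‖μ * y i‖ := by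
          rw [Finset.mul_sum]; exact Finset.sum_congr rfl fun i _ => (norm_mul μ (y i)).symm
      _ = ∑ i, ‖(α : ℂ) * ∑ j, (S i j : ℂ) * y j‖ := by
          exact Finset.sum_congr rfl fun i _ => by rw [hSy i]
      _ ≤ ∑ i, α * ∑ j, S i j * ‖y j‖ := by
          refine Finset.sum_le_sum fun i _ => ?_
          rw [norm_mul, Complex.norm_real, Real.norm_of_nonneg hα0]
          refine mul_le_mul_of_nonneg_left ?_ hα0
          calc ‖∑ j, (S i j : ℂ) * y j‖ ≤ ∑ j, ‖(S i j : ℂ) * y j‖ := norm_sum_le _ _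
            _ = ∑ j, S i j * ‖y j‖ := by
                refine Finset.sum_congr rfl fun j _ => ?_
                rw [norm_mul, Complex.norm_real, Real.norm_of_nonneg (hS0 i j)]
      _ = α * ∑ j, ‖y j‖ := by
          rw [← Finset.mul_sum, Finset.sum_comm]
          congr 1
          refine Finset.sum_congr rfl fun j _ => ?_
          rw [← Finset.sum_mul, hS1, one_mul]
  exact le_of_mul_le_mul_right hineq hpos
end

section
/- Consider an asynchronous iteration for the contraction f(x) = R·x + b with ‖R‖₁ ≤ α < 1, partitioned into p blocks: at each time t ∈ Tᵢ, block i updates x_{i}(t+1) = f_i applied to delayed components x_{j}(τ_j^i(t)) with τ_j^i(t) ≤ t, and blocks are unchanged otherwise. Assume total asynchronism conditions: each Tᵢ is infinite and τ_j^i(t) → ∞ as t → ∞. Then x(t) converges to the unique fixed point x* of f. -/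
open Matrix BigOperators Filter Topology

lemma stmt14_weights (n : ℕ) (A : Matrix (Fin n) (Fin n) ℝ) (hA0 : ∀ i j, 0 ≤ A i j)
    (α β : ℝ) (hα0 : 0 ≤ α) (hαβ : α < β) (hβ1 : β ≤ 1)
    (hcol : ∀ j, ∑ i, A i j ≤ α) :
    ∃ w : Fin n → ℝ, (∀ k, 1 ≤ w k) ∧ ∀ k, ∑ j, A k j * w j ≤ β * w k := by
  have hβ0 : 0 < β := lt_of_le_of_lt hα0 hαβ
  -- powers are nonneg
  have hpow0 : ∀ m, ∀ i j, 0 ≤ (A ^ m) i j := by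
    intro m
    induction m with
    | zero => intro i j; simp [Matrix.one_apply]; positivity
    | succ m ih =>
      intro i j
      rw [pow_succ, Matrix.mul_apply]
      exact Finset.sum_nonneg fun l _ => mul_nonneg (ih i l) (hA0 l j)
  -- column sums of powers
  have hcolpow : ∀ m, ∀ j, ∑ i, (A ^ m) i j ≤ α ^ m := by
    intro m
    induction m with
    | zero => intro j; simp [Matrix.one_apply]
      -- ∑ i, (1 : Matrix) i j = 1
    | succ m ih =>
      intro j
      have : ∑ i, (A ^ (m + 1)) i j = ∑ l, (∑ i, (A ^ m) i l) * A l j := by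
        simp only [pow_succ, Matrix.mul_apply, Finset.sum_mul]
        rw [Finset.sum_comm]
      rw [this, pow_succ]
      calc ∑ l, (∑ i, (A ^ m) i l) * A l j ≤ ∑ l, α ^ m * A l j := by
            refine Finset.sum_le_sum fun l _ => mul_le_mul_of_nonneg_right (ih l) (hA0 l j)
        _ = α ^ m * ∑ l, A l j := by rw [Finset.mul_sum]
        _ ≤ α ^ m * α := mul_le_mul_of_nonneg_left (hcol j) (pow_nonneg hα0 m)
  have hentry : ∀ m, ∀ i j, (A ^ m) i j ≤ α ^ m := fun m i j =>
    le_trans (Finset.single_le_sum (fun l _ => hpow0 m l j) (Finset.mem_univ i)) (hcolpow m j)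
  -- choose N
  have hr1 : α / β < 1 := (div_lt_one hβ0).2 hαβ
  have hr0 : 0 ≤ α / β := div_nonneg hα0 hβ0.le
  have hlim : Tendsto (fun N => (n : ℝ) * (α / β) ^ N) atTop (nhds 0) := by
    simpa using (tendsto_pow_atTop_nhds_zero_of_lt_one hr0 hr1).const_mul (n : ℝ)
  obtain ⟨N, hN1, hN⟩ : ∃ N, 1 ≤ N ∧ (n : ℝ) * (α / β) ^ N ≤ 1 := by
    have := (hlim.eventually_le_const (by norm_num : (0:ℝ) < 1)).and (eventually_ge_atTop 1)
    obtain ⟨N, h1, h2⟩ := this.exists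
    exact ⟨N, h2, h1⟩
  -- define weights
  set r : ℕ → Fin n → ℝ := fun m k => ∑ j, (A ^ m) k j with hr
  have hr0' : ∀ m k, 0 ≤ r m k := fun m k => Finset.sum_nonneg fun j _ => hpow0 m k j
  have hrm : ∀ m k, r m k ≤ (n : ℝ) * α ^ m := by
    intro m k
    calc r m k ≤ ∑ _j : Fin n, α ^ m := Finset.sum_le_sum fun j _ => hentry m k j
      _ = (n : ℝ) * α ^ m := by simp [Finset.sum_const, nsmul_eq_mul]
  have hr0eq : ∀ k, r 0 k = 1 := by intro k; simp [hr, Matrix.one_apply]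
  refine ⟨fun k => ∑ m ∈ Finset.range N, r m k / β ^ m, fun k => ?_, fun k => ?_⟩
  · obtain ⟨N', rfl⟩ := Nat.exists_eq_succ_of_ne_zero (by omega : N ≠ 0)
    simp only
    rw [Finset.sum_range_succ']
    have : ∀ m ∈ Finset.range N', 0 ≤ r (m + 1) k / β ^ (m + 1) :=
      fun m _ => div_nonneg (hr0' _ _) (pow_nonneg hβ0.le _)
    have h0 : r 0 k / β ^ 0 = 1 := by simp [hr0eq]
    nlinarith [Finset.sum_nonneg this]
  · -- key recursion
    have hrec : ∀ m, ∑ j, A k j * r m j = r (m + 1) k := by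
      intro m
      simp only [hr, Finset.mul_sum]
      rw [Finset.sum_comm]
      refine Finset.sum_congr rfl fun l _ => ?_
      rw [pow_succ', Matrix.mul_apply]
    simp only
    have step1 : ∑ j, A k j * ∑ m ∈ Finset.range N, r m j / β ^ m
        = ∑ m ∈ Finset.range N, r (m + 1) k / β ^ m := by
      simp only [Finset.mul_sum]
      rw [Finset.sum_comm]
      refine Finset.sum_congr rfl fun m _ => ?_
      rw [← hrec m, Finset.sum_div]
      exact Finset.sum_congr rfl fun j _ => by ring
    have h1 : ∑ m ∈ Finset.range (N + 1), r m k / β ^ m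
        = (∑ m ∈ Finset.range N, r (m + 1) k / β ^ (m + 1)) + r 0 k / β ^ 0 :=
      Finset.sum_range_succ' _ N
    have h2 : ∑ m ∈ Finset.range (N + 1), r m k / β ^ m
        = (∑ m ∈ Finset.range N, r m k / β ^ m) + r N k / β ^ N :=
      Finset.sum_range_succ _ N
    have h3 : ∑ m ∈ Finset.range N, r (m + 1) k / β ^ m
        = β * ∑ m ∈ Finset.range N, r (m + 1) k / β ^ (m + 1) := by
      rw [Finset.mul_sum]
      refine Finset.sum_congr rfl fun m _ => ?_
      rw [pow_succ]
      have : β ^ m ≠ 0 := (pow_pos hβ0 m).ne'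
      field_simp
    have h0 : r 0 k / β ^ 0 = 1 := by simp [hr0eq]
    have h4 : ∑ m ∈ Finset.range N, r (m + 1) k / β ^ (m + 1)
        = (∑ m ∈ Finset.range N, r m k / β ^ m) + r N k / β ^ N - 1 := by
      rw [h0] at h1; linarith
    have hb : (0:ℝ) < β ^ N := pow_pos hβ0 N
    have htail : r N k / β ^ N ≤ 1 := by
      rw [div_le_one hb]
      calc r N k ≤ (n : ℝ) * α ^ N := hrm N k
        _ ≤ β ^ N := by
          rw [div_pow, ← mul_div_assoc, div_le_one hb] at hN
          exact hN
    rw [step1, h3, h4]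
    nlinarith [htail, hβ0]


theorem stmt14 (n p : ℕ) (R : Matrix (Fin n) (Fin n) ℝ) (b : Fin n → ℝ) (α : ℝ)
    (hα0 : 0 ≤ α) (hα1 : α < 1)
    (hR : ∀ x : Fin n → ℝ, ∑ i, |R.mulVec x i| ≤ α * ∑ i, |x i|)
    (xs : Fin n → ℝ) (hxs : R.mulVec xs + b = xs)
    (blk : Fin n → Fin p)
    (T : Fin p → Set ℕ) (hT : ∀ i, (T i).Infinite)
    (τ : Fin p → Fin p → ℕ → ℕ)
    (hτle : ∀ i j t, τ i j t ≤ t)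
    (hτlim : ∀ i j, Tendsto (τ i j) atTop atTop)
    (x : ℕ → Fin n → ℝ)
    (hupd : ∀ t k, t ∈ T (blk k) →
      x (t + 1) k = R.mulVec (fun j => x (τ (blk k) (blk j) t) j) k + b k)
    (hkeep : ∀ t k, t ∉ T (blk k) → x (t + 1) k = x t k) :
    Tendsto x atTop (nhds xs) := by
  classical
  set A : Matrix (Fin n) (Fin n) ℝ := fun i j => |R i j| with hAdef
  have hA0 : ∀ i j, 0 ≤ A i j := fun i j => abs_nonneg _
  -- column sums of A bounded by α
  have hcol : ∀ j, ∑ i, A i j ≤ α := by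
    intro j
    have h := hR (Pi.single j 1)
    have h1 : ∀ i, R.mulVec (Pi.single j 1) i = R i j := by
      intro i
      simp [Matrix.mulVec_single]
    have h2 : ∑ i, |Pi.single j (1:ℝ) i| = 1 := by
      rw [Finset.sum_eq_single j] <;> simp [Pi.single_apply]
    simp only [h1, h2, mul_one] at h
    exact h
  set β : ℝ := (1 + α) / 2 with hβdef
  have hαβ : α < β := by rw [hβdef]; linarith
  have hβ0 : 0 < β := lt_of_le_of_lt hα0 hαβ
  have hβ1 : β < 1 := by rw [hβdef]; linarith
  obtain ⟨w, hw1, hAw⟩ := stmt14_weights n A hA0 α β hα0 hαβ hβ1.le hcol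
  have hw0 : ∀ k, 0 ≤ w k := fun k => le_trans zero_le_one (hw1 k)
  -- componentwise fixed point
  have hfix : ∀ k, ∑ j, R k j * xs j + b k = xs k := by
    intro k
    have := congrFun hxs k
    simpa [Matrix.mulVec, dotProduct] using this
  -- the key one-step estimate
  have hstep : ∀ (d : ℝ), 0 ≤ d → ∀ t k, t ∈ T (blk k) →
      (∀ j, |x (τ (blk k) (blk j) t) j - xs j| ≤ d * w j) →
      |x (t + 1) k - xs k| ≤ β * d * w k := by
    intro d hd t k ht hj
    have e1 : x (t + 1) k - xs k
        = ∑ j, R k j * (x (τ (blk k) (blk j) t) j - xs j) := by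
      rw [hupd t k ht]
      have h5 : R.mulVec (fun j => x (τ (blk k) (blk j) t) j) k
          = ∑ j, R k j * x (τ (blk k) (blk j) t) j := by
        simp [Matrix.mulVec, dotProduct]
      have h6 : ∑ j, R k j * (x (τ (blk k) (blk j) t) j - xs j)
          = (∑ j, R k j * x (τ (blk k) (blk j) t) j) - ∑ j, R k j * xs j := by
        simp [mul_sub, Finset.sum_sub_distrib]
      rw [h5, h6]
      have := hfix k
      linarith
    rw [e1]
    calc |∑ j, R k j * (x (τ (blk k) (blk j) t) j - xs j)|
        ≤ ∑ j, |R k j * (x (τ (blk k) (blk j) t) j - xs j)| :=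
          Finset.abs_sum_le_sum_abs _ _
      _ = ∑ j, A k j * |x (τ (blk k) (blk j) t) j - xs j| := by
          exact Finset.sum_congr rfl fun j _ => abs_mul _ _
      _ ≤ ∑ j, A k j * (d * w j) :=
          Finset.sum_le_sum fun j _ =>
            mul_le_mul_of_nonneg_left (hj j) (hA0 k j)
      _ = d * ∑ j, A k j * w j := by
          rw [Finset.mul_sum]; exact Finset.sum_congr rfl fun j _ => by ring
      _ ≤ d * (β * w k) := mul_le_mul_of_nonneg_left (hAw k) hd
      _ = β * d * w k := by ring
  -- global bound
  set c : ℝ := ∑ k, |x 0 k - xs k| with hcdef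
  have hc0 : 0 ≤ c := Finset.sum_nonneg fun k _ => abs_nonneg _
  have hbase : ∀ k, |x 0 k - xs k| ≤ c * w k := by
    intro k
    calc |x 0 k - xs k| ≤ ∑ l, |x 0 l - xs l| :=
          Finset.single_le_sum (f := fun l => |x 0 l - xs l|)
            (fun l _ => abs_nonneg _) (Finset.mem_univ k)
      _ = c := hcdef.symm
      _ = c * 1 := (mul_one c).symm
      _ ≤ c * w k := mul_le_mul_of_nonneg_left (hw1 k) hc0
  have hglob : ∀ t k, |x t k - xs k| ≤ c * w k := by
    intro t
    induction t using Nat.strong_induction_on with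
    | _ t ih =>
      match t with
      | 0 => exact hbase
      | Nat.succ t =>
        intro k
        by_cases ht : t ∈ T (blk k)
        · have hb := hstep c hc0 t k ht
            (fun j => ih _ (Nat.lt_succ_of_le (hτle _ _ _)) j)
          calc |x (t + 1) k - xs k| ≤ β * c * w k := hb
            _ ≤ 1 * (c * w k) := by
                rw [mul_assoc]
                exact mul_le_mul_of_nonneg_right hβ1.le
                  (mul_nonneg hc0 (hw0 k))
            _ = c * w k := one_mul _
        · rw [hkeep t k ht]; exact ih t (Nat.lt_succ_self t) k
  -- stage lemma
  have hstage : ∀ m : ℕ, ∃ tm : ℕ, ∀ t, tm ≤ t → ∀ k,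
      |x t k - xs k| ≤ β ^ m * c * w k := by
    intro m
    induction m with
    | zero => exact ⟨0, fun t _ k => by simpa using hglob t k⟩
    | succ m ihm =>
      obtain ⟨tm, htm⟩ := ihm
      have hev : ∀ᶠ t in atTop, ∀ i j, tm ≤ τ i j t :=
        eventually_all.2 fun i => eventually_all.2 fun j =>
          (hτlim i j).eventually_ge_atTop tm
      obtain ⟨s, hs⟩ := eventually_atTop.1 hev
      have hu : ∀ k : Fin n, ∃ u, u ∈ T (blk k) ∧ s ≤ u := by
        intro k
        obtain ⟨u, h1, h2⟩ := (hT (blk k)).exists_gt s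
        exact ⟨u, h1, h2.le⟩
      choose u hu1 hu2 using hu
      refine ⟨Finset.univ.sup fun k => u k + 1, fun t ht k => ?_⟩
      have hk : u k + 1 ≤ t :=
        le_trans (Finset.le_sup (f := fun k => u k + 1) (Finset.mem_univ k)) ht
      have hd : 0 ≤ β ^ m * c := mul_nonneg (pow_nonneg hβ0.le m) hc0
      clear ht
      induction t, hk using Nat.le_induction with
      | base =>
        have hb := hstep (β ^ m * c) hd (u k) k (hu1 k)
          (fun j => htm _ (hs (u k) (hu2 k) _ _) j)
        calc |x (u k + 0 + 1) k - xs k| ≤ β * (β ^ m * c) * w k := hb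
          _ = β ^ (m + 1) * c * w k := by ring
      | succ t ht' ihk =>
        by_cases hmem : t ∈ T (blk k)
        · have hst : s ≤ t := le_trans (le_trans (hu2 k) (Nat.le_succ _)) ht'
          have hb := hstep (β ^ m * c) hd t k hmem
            (fun j => htm _ (hs t hst _ _) j)
          calc |x (t + 1) k - xs k| ≤ β * (β ^ m * c) * w k := hb
            _ = β ^ (m + 1) * c * w k := by ring
        · rw [hkeep t k hmem]; exact ihk
  -- conclusion
  rw [tendsto_pi_nhds]
  intro k
  rw [Metric.tendsto_atTop]
  intro ε hε
  have hβlim : Tendsto (fun m => β ^ m * (c * w k)) atTop (nhds 0) := by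
    simpa using
      (tendsto_pow_atTop_nhds_zero_of_lt_one hβ0.le hβ1).mul_const (c * w k)
  obtain ⟨m, hm⟩ := (hβlim.eventually_lt_const hε).exists
  obtain ⟨tm, htm⟩ := hstage m
  refine ⟨tm, fun t ht => ?_⟩
  rw [Real.dist_eq]
  calc |x t k - xs k| ≤ β ^ m * c * w k := htm t ht k
    _ = β ^ m * (c * w k) := by ring
    _ < ε := hm
end

section
/- Asynchronous convergence theorem (nested box sets): Let f : X → X with X = X₁ × … × X_p a product of metric spaces, and let X(k) ⊆ X, k ∈ ℕ, be sets satisfying (a) X(k+1) ⊆ X(k), (b) each X(k) = X₁(k) × … × X_p(k) is a product (box condition), (c) f(X(k)) ⊆ X(k+1), and (d) any limit point of any sequence y^k ∈ X(k) is a fixed point of f. Then for any totally asynchronous iteration with x(0) ∈ X(0), every limit point of the sequence {x(t)} is a fixed point of f. -/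
open Filter Topology

theorem stmt15 (p : ℕ) (X : Fin p → Type*) [∀ i, MetricSpace (X i)]
    (f : (∀ i, X i) → (∀ i, X i))
    (B : ℕ → ∀ i, Set (X i))
    (hnest : ∀ k i, B (k + 1) i ⊆ B k i)
    (hmap : ∀ k (x : ∀ i, X i), (∀ i, x i ∈ B k i) → ∀ i, f x i ∈ B (k + 1) i)
    (hfix : ∀ y : ℕ → ∀ i, X i, (∀ k i, y k i ∈ B k i) →
      ∀ z, MapClusterPt z atTop y → f z = z)
    (T : Fin p → Set ℕ) (hT : ∀ i, (T i).Infinite)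
    (τ : Fin p → Fin p → ℕ → ℕ)
    (hτle : ∀ i j t, τ i j t ≤ t)
    (hτlim : ∀ i j, Tendsto (τ i j) atTop atTop)
    (x : ℕ → ∀ i, X i)
    (hx0 : ∀ i, x 0 i ∈ B 0 i)
    (hupd : ∀ t i, t ∈ T i → x (t + 1) i = f (fun j => x (τ i j t) j) i)
    (hkeep : ∀ t i, t ∉ T i → x (t + 1) i = x t i) :
    ∀ z, MapClusterPt z atTop x → f z = z := by
  have key : ∀ k, ∃ N, ∀ t, N ≤ t → ∀ i, x t i ∈ B k i := by
    intro k
    induction k with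
    | zero =>
      refine ⟨0, fun t _ => ?_⟩
      induction t using Nat.strong_induction_on with
      | _ t ih =>
        match t with
        | 0 => exact hx0
        | Nat.succ t =>
          intro i
          by_cases h : t ∈ T i
          · rw [hupd t i h]
            exact hnest 0 i (hmap 0 _
              (fun j => ih (τ i j t) (Nat.lt_succ_of_le (hτle i j t)) (Nat.zero_le _) j) i)
          · rw [hkeep t i h]; exact ih t (Nat.lt_succ_self t) (Nat.zero_le _) i
    | succ k ih =>
      obtain ⟨N, hN⟩ := ih
      have hev : ∀ᶠ t in atTop, ∀ i j, N ≤ τ i j t := by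
        refine eventually_all.2 fun i => eventually_all.2 fun j => ?_
        exact (hτlim i j).eventually_ge_atTop N
      obtain ⟨M, hM⟩ := eventually_atTop.1 hev
      have hupd' : ∀ t i, M ≤ t → t ∈ T i → x (t + 1) i ∈ B (k + 1) i := by
        intro t i hMt ht
        rw [hupd t i ht]
        exact hmap k _ (fun j => hN _ (hM t hMt i j) j) i
      have hu : ∀ i, ∃ u, u ∈ T i ∧ M ≤ u := by
        intro i
        obtain ⟨u, hu1, hu2⟩ := (hT i).exists_gt M
        exact ⟨u, hu1, hu2.le⟩
      choose u hu1 hu2 using hu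
      have main : ∀ i t, u i + 1 ≤ t → x t i ∈ B (k + 1) i := by
        intro i t
        induction t with
        | zero => omega
        | succ t iht =>
          intro ht
          rcases Nat.lt_or_ge t (u i + 1) with h | h
          · have : t = u i := by omega
            subst this
            exact hupd' _ _ (hu2 i) (hu1 i)
          · by_cases hT' : t ∈ T i
            · exact hupd' t i (le_trans (hu2 i) (by omega)) hT'
            · rw [hkeep t i hT']; exact iht h
      refine ⟨(Finset.univ.sup u) + 1, fun t ht i => ?_⟩
      exact main i t (le_trans (Nat.succ_le_succ (Finset.le_sup (Finset.mem_univ i))) ht)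
  intro z hz
  have hfreq := mapClusterPt_iff_frequently.1 hz
  have hg : ∀ k : ℕ, ∃ t, (∀ i, x t i ∈ B k i) ∧ dist (x t) z < 1 / (k + 1) := by
    intro k
    obtain ⟨N, hN⟩ := key k
    have := hfreq (Metric.ball z (1 / (k + 1))) (Metric.ball_mem_nhds z (by positivity))
    obtain ⟨t, ht1, ht2⟩ := (frequently_atTop.1 this) N
    exact ⟨t, hN t ht1, by simpa [Metric.mem_ball] using ht2⟩
  choose g hg1 hg2 using hg
  apply hfix (fun k => x (g k)) hg1 z
  have htend : Tendsto (fun k => x (g k)) atTop (𝓝 z) := by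
    rw [tendsto_iff_dist_tendsto_zero]
    refine squeeze_zero (fun k => dist_nonneg) (fun k => (hg2 k).le) ?_
    exact tendsto_one_div_add_atTop_nhds_zero_nat
  exact htend.mapClusterPt
end
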